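/- arXiv:1611.02160 — 4 statements merged into one kernel-verified Lean document; each statement's English description precedes it below -/
import Mathlib

section
/- Let $Q : [0,\infty) \to \mathrm{End}(V)$ satisfy $Q'(t) = -Q(t)R(t)$, $Q(0)=\mathrm{id}$, where $R(t)$ is symmetric with $k_1 \le R(t) \le k_2$ for constants $k_1 \le k_2$. Then for all $t \ge 0$, $\|\mathrm{id} - e^{\frac{k_1+k_2}{2}t} Q(t)\| \le e^{\frac{k_2-k_1}{2}t} - 1$. -/
set_option maxHeartbeats 1000000

open Real Filter MeasureTheory
open scoped RealInnerProductSpace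

section Aux
variable {V : Type*} [NormedAddCommGroup V] [InnerProductSpace ℝ V] [FiniteDimensional ℝ V]

private lemma sym_norm_le (T : V →L[ℝ] V) (C : ℝ) (hC : 0 ≤ C)
    (hsym : ∀ u v : V, ⟪T u, v⟫ = ⟪u, T v⟫)
    (hbd : ∀ v : V, |⟪T v, v⟫| ≤ C * ‖v‖ ^ 2) : ‖T‖ ≤ C := by
  refine T.opNorm_le_bound hC (fun x => ?_)
  rcases eq_or_ne (T x) 0 with h | h
  · rw [h, norm_zero]; positivity
  have hx : x ≠ 0 := by rintro rfl; simp at h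
  have hxpos : (0:ℝ) < ‖x‖ := norm_pos_iff.mpr hx
  have hTxpos : (0:ℝ) < ‖T x‖ := norm_pos_iff.mpr h
  set u : V := (‖x‖ * ‖T x‖⁻¹) • T x with hu
  have hun : ‖u‖ = ‖x‖ := by
    rw [hu, norm_smul, Real.norm_eq_abs, abs_mul, abs_of_pos hxpos, abs_inv,
      abs_of_pos hTxpos, mul_assoc, inv_mul_cancel₀ hTxpos.ne', mul_one]
  have expand : ∀ a b : V, ⟪T (a + b), a + b⟫ = ⟪T a, a⟫ + 2 * ⟪T a, b⟫ + ⟪T b, b⟫ := by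
    intro a b
    have hba : ⟪T b, a⟫ = ⟪T a, b⟫ := by
      rw [hsym b a, real_inner_comm]
    simp only [map_add, inner_add_left, inner_add_right, hba]
    ring
  have expand' : ∀ a b : V, ⟪T (a - b), a - b⟫ = ⟪T a, a⟫ - 2 * ⟪T a, b⟫ + ⟪T b, b⟫ := by
    intro a b
    have h := expand a (-b)
    simp only [map_neg, inner_neg_left, inner_neg_right, mul_neg, neg_neg] at h
    rw [sub_eq_add_neg, h]; ring
  have key : 4 * ⟪T x, u⟫ = ⟪T (x + u), x + u⟫ - ⟪T (x - u), x - u⟫ := by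
    rw [expand, expand']; ring
  have hpar : ‖x + u‖ ^ 2 + ‖x - u‖ ^ 2 = 2 * ‖x‖ ^ 2 + 2 * ‖u‖ ^ 2 := by
    rw [← real_inner_self_eq_norm_sq, ← real_inner_self_eq_norm_sq,
      ← real_inner_self_eq_norm_sq, ← real_inner_self_eq_norm_sq]
    simp only [inner_add_left, inner_add_right, inner_sub_left, inner_sub_right]
    rw [real_inner_comm u x]; ring
  have h1 : ⟪T (x + u), x + u⟫ ≤ C * ‖x + u‖ ^ 2 := (abs_le.mp (hbd _)).2
  have h2 : -(C * ‖x - u‖ ^ 2) ≤ ⟪T (x - u), x - u⟫ := (abs_le.mp (hbd _)).1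
  have h4 : ‖x + u‖ ^ 2 + ‖x - u‖ ^ 2 = 4 * ‖x‖ ^ 2 := by rw [hpar, hun]; ring
  have hkey : 4 * ⟪T x, u⟫ ≤ 4 * (C * ‖x‖ ^ 2) := by
    rw [key]
    have hc : C * ‖x + u‖ ^ 2 + C * ‖x - u‖ ^ 2 = 4 * (C * ‖x‖ ^ 2) := by
      rw [← mul_add, h4]; ring
    linarith
  have hinner : ⟪T x, u⟫ = ‖x‖ * ‖T x‖ := by
    rw [hu, real_inner_smul_right, real_inner_self_eq_norm_sq]
    field_simp
  have hfin : 4 * (‖x‖ * ‖T x‖) ≤ 4 * (C * ‖x‖ ^ 2) := by rw [← hinner]; exact hkey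
  nlinarith [hfin, hxpos]


private lemma aux_Q_norm_le
    (k₁ k₂ : ℝ) (hk : k₁ ≤ k₂)
    (R Q : ℝ → (V →L[ℝ] V)) (hRcont : Continuous R)
    (hRsym : ∀ t, 0 ≤ t → ∀ u v : V, ⟪R t u, v⟫ = ⟪u, R t v⟫)
    (hRlow : ∀ t, 0 ≤ t → ∀ v : V, k₁ * ‖v‖ ^ 2 ≤ ⟪R t v, v⟫)
    (hQ0 : Q 0 = ContinuousLinearMap.id ℝ V)
    (hQ : ∀ t, 0 ≤ t → HasDerivAt Q (-((Q t).comp (R t))) t) :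
    ∀ s, 0 ≤ s → ‖Q s‖ ≤ Real.exp (-k₁ * s) := by
  classical
  -- adjoint as a continuous linear map
  set A : (V →L[ℝ] V) →L[ℝ] (V →L[ℝ] V) :=
    LinearMap.mkContinuous
      { toFun := fun B => ContinuousLinearMap.adjoint B
        map_add' := fun B₁ B₂ => map_add _ B₁ B₂
        map_smul' := fun c B => by simp }
      1 (fun B => by simp [ContinuousLinearMap.adjoint.norm_map]) with hA
  have hAapp : ∀ B : V →L[ℝ] V, A B = ContinuousLinearMap.adjoint B := fun _ => rfl
  set P : ℝ → (V →L[ℝ] V) := fun s => A (Q s) with hPdef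
  have hRadj : ∀ s, 0 ≤ s → ContinuousLinearMap.adjoint (R s) = R s := fun s hs =>
    ((ContinuousLinearMap.eq_adjoint_iff (R s) (R s)).mpr (hRsym s hs)).symm
  have hP : ∀ s, 0 ≤ s → HasDerivAt P (-((R s).comp (P s))) s := by
    intro s hs
    have h := A.hasFDerivAt.comp_hasDerivAt s (hQ s hs)
    have : A (-((Q s).comp (R s))) = -((R s).comp (P s)) := by
      rw [hAapp, map_neg, ContinuousLinearMap.adjoint_comp, hRadj s hs, hPdef]
      rfl
    rwa [this] at h
  have hP0 : P 0 = ContinuousLinearMap.id ℝ V := by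
    rw [hPdef]; simp only [hQ0, hAapp]
    exact ContinuousLinearMap.adjoint_id
  -- pointwise bound on P
  have hPnorm : ∀ s, 0 ≤ s → ∀ v : V, ‖P s v‖ ≤ Real.exp (-k₁ * s) * ‖v‖ := by
    intro s hs v
    set g : ℝ → ℝ := fun s => Real.exp (2 * k₁ * s) * ⟪P s v, P s v⟫ with hg
    have hgd : ∀ x, 0 ≤ x → HasDerivAt g
        (Real.exp (2 * k₁ * x) * (2 * k₁) * ⟪P x v, P x v⟫ +
          Real.exp (2 * k₁ * x) *
            (⟪P x v, (-((R x).comp (P x))) v⟫ + ⟪(-((R x).comp (P x))) v, P x v⟫)) x := by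
      intro x hx
      have hPv : HasDerivAt (fun y => P y v) ((-((R x).comp (P x))) v) x := by
        simpa using (hP x hx).clm_apply (hasDerivAt_const x v)
      have hexp : HasDerivAt (fun y => Real.exp (2 * k₁ * y))
          (Real.exp (2 * k₁ * x) * (2 * k₁)) x := by
        have h1 : HasDerivAt (fun y : ℝ => 2 * k₁ * y) (2 * k₁) x := by
          simpa using (hasDerivAt_id x).const_mul (2 * k₁)
        have := (Real.hasDerivAt_exp (2 * k₁ * x)).comp x h1
        simpa [Function.comp_def] using this
      exact hexp.mul (hPv.inner ℝ hPv)
    have hmono : AntitoneOn g (Set.Ici 0) := by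
      apply antitoneOn_of_deriv_nonpos (convex_Ici 0)
      · intro x hx
        exact ((hgd x hx).continuousAt).continuousWithinAt
      · intro x hx
        rw [interior_Ici] at hx
        exact (hgd x (le_of_lt hx)).differentiableAt.differentiableWithinAt
      · intro x hx
        rw [interior_Ici] at hx
        rw [(hgd x (le_of_lt hx)).deriv]
        have hRge : k₁ * ⟪P x v, P x v⟫ ≤ ⟪R x (P x v), P x v⟫ := by
          have := hRlow x (le_of_lt hx) (P x v)
          rwa [real_inner_self_eq_norm_sq]
        have hcomm : ⟪P x v, R x (P x v)⟫ = ⟪R x (P x v), P x v⟫ := real_inner_comm _ _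
        have hepos : (0:ℝ) < Real.exp (2 * k₁ * x) := Real.exp_pos _
        simp only [ContinuousLinearMap.neg_apply, ContinuousLinearMap.comp_apply,
          inner_neg_left, inner_neg_right, hcomm]
        nlinarith [hepos, hRge]
    have hle : g s ≤ g 0 := hmono Set.self_mem_Ici hs hs
    have hg0 : g 0 = ‖v‖ ^ 2 := by
      simp [hg, hP0, real_inner_self_eq_norm_sq]
    have hgs : g s = Real.exp (2 * k₁ * s) * ‖P s v‖ ^ 2 := by
      simp only [hg, real_inner_self_eq_norm_sq]
    have hsq : ‖P s v‖ ^ 2 ≤ (Real.exp (-k₁ * s) * ‖v‖) ^ 2 := by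
      have hepos : (0:ℝ) < Real.exp (2 * k₁ * s) := Real.exp_pos _
      have h1 : Real.exp (2 * k₁ * s) * ‖P s v‖ ^ 2 ≤ ‖v‖ ^ 2 := by
        rw [← hgs, ← hg0]; exact hle
      have h2 : Real.exp (-k₁ * s) ^ 2 * Real.exp (2 * k₁ * s) = 1 := by
        rw [sq, ← Real.exp_add, ← Real.exp_add, ← Real.exp_zero]
        ring_nf
      rw [mul_pow]
      nlinarith [mul_le_mul_of_nonneg_left h1 (sq_nonneg (Real.exp (-k₁ * s)))]
    have := Real.sqrt_le_sqrt hsq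
    rwa [Real.sqrt_sq (norm_nonneg _), Real.sqrt_sq (by positivity)] at this
  intro s hs
  have : ‖P s‖ ≤ Real.exp (-k₁ * s) :=
    (P s).opNorm_le_bound (Real.exp_pos _).le (hPnorm s hs)
  calc ‖Q s‖ = ‖A (Q s)‖ := by rw [hAapp]; exact (ContinuousLinearMap.adjoint.norm_map _).symm
    _ ≤ Real.exp (-k₁ * s) := this


end Aux

/-- If `Q` solves `Q' = -Q ∘ R`, `Q 0 = id`, with each `R t` symmetric and `k₁ ≤ R t ≤ k₂`
as quadratic forms (`k₁ ≤ k₂`), then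
`‖id - exp ((k₁+k₂)/2 · t) • Q t‖ ≤ exp ((k₂-k₁)/2 · t) - 1` for all `t ≥ 0`. -/
theorem id_sub_exp_smul_Q_norm_bound
    {V : Type*} [NormedAddCommGroup V] [InnerProductSpace ℝ V] [FiniteDimensional ℝ V]
    (k₁ k₂ : ℝ) (hk : k₁ ≤ k₂)
    (R Q : ℝ → (V →L[ℝ] V)) (hRcont : Continuous R)
    (hRsym : ∀ t, 0 ≤ t → ∀ u v : V, ⟪R t u, v⟫ = ⟪u, R t v⟫)
    (hRlow : ∀ t, 0 ≤ t → ∀ v : V, k₁ * ‖v‖ ^ 2 ≤ ⟪R t v, v⟫)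
    (hRup : ∀ t, 0 ≤ t → ∀ v : V, ⟪R t v, v⟫ ≤ k₂ * ‖v‖ ^ 2)
    (hQ0 : Q 0 = ContinuousLinearMap.id ℝ V)
    (hQ : ∀ t, 0 ≤ t → HasDerivAt Q (-((Q t).comp (R t))) t) :
    ∀ t, 0 ≤ t →
      ‖ContinuousLinearMap.id ℝ V - Real.exp ((k₁ + k₂) / 2 * t) • Q t‖ ≤
        Real.exp ((k₂ - k₁) / 2 * t) - 1 := by
  have hQn : ∀ s, 0 ≤ s → ‖Q s‖ ≤ Real.exp (-k₁ * s) :=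
    aux_Q_norm_le k₁ k₂ hk R Q hRcont hRsym hRlow hQ0 hQ
  have hSnorm : ∀ s, 0 ≤ s →
      ‖R s - ((k₁ + k₂) / 2) • ContinuousLinearMap.id ℝ V‖ ≤ (k₂ - k₁) / 2 := by
    intro s hs
    apply sym_norm_le _ _ (by linarith)
    · intro u v
      simp only [ContinuousLinearMap.sub_apply, ContinuousLinearMap.smul_apply,
        ContinuousLinearMap.id_apply, inner_sub_left, inner_sub_right,
        real_inner_smul_left, real_inner_smul_right, hRsym s hs u v, real_inner_comm u v]
    · intro v
      have h1 := hRlow s hs v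
      have h2 := hRup s hs v
      have heq : ⟪(R s - ((k₁ + k₂) / 2) • ContinuousLinearMap.id ℝ V) v, v⟫
          = ⟪R s v, v⟫ - (k₁ + k₂) / 2 * ‖v‖ ^ 2 := by
        rw [ContinuousLinearMap.sub_apply, inner_sub_left, ContinuousLinearMap.smul_apply,
          ContinuousLinearMap.id_apply, real_inner_smul_left, real_inner_self_eq_norm_sq]
      rw [heq, abs_le]
      constructor <;> nlinarith
  intro t ht
  set c : ℝ := (k₁ + k₂) / 2 with hc
  set d : ℝ := (k₂ - k₁) / 2 with hd
  have hd0 : (0:ℝ) ≤ d := by rw [hd]; linarith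
  set S : ℝ → (V →L[ℝ] V) := fun s => R s - c • ContinuousLinearMap.id ℝ V with hS
  set F : ℝ → (V →L[ℝ] V) := fun s => ContinuousLinearMap.id ℝ V - Real.exp (c * s) • Q s with hF
  set G : ℝ → (V →L[ℝ] V) := fun s => Real.exp (c * s) • ((Q s).comp (S s)) with hG
  have hFd : ∀ s ∈ Set.uIcc 0 t, HasDerivAt F (G s) s := by
    intro s hsmem
    rw [Set.uIcc_of_le ht] at hsmem
    have hs : 0 ≤ s := hsmem.1
    have hexp : HasDerivAt (fun y => Real.exp (c * y)) (Real.exp (c * s) * c) s := by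
      have h1 : HasDerivAt (fun y : ℝ => c * y) c s := by
        simpa using (hasDerivAt_id s).const_mul c
      simpa [Function.comp_def] using (Real.hasDerivAt_exp (c * s)).comp s h1
    have h1 := ((hasDerivAt_const s (ContinuousLinearMap.id ℝ V)).sub (hexp.smul (hQ s hs)))
    refine h1.congr_deriv ?_
    rw [hG, hS]
    simp only [ContinuousLinearMap.comp_sub, ContinuousLinearMap.comp_smul,
      ContinuousLinearMap.comp_id, zero_sub]
    module
  have hQcont : ContinuousOn Q (Set.uIcc 0 t) := by
    intro s hsmem
    rw [Set.uIcc_of_le ht] at hsmem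
    exact ((hQ s hsmem.1).continuousAt).continuousWithinAt
  have hGcont : ContinuousOn G (Set.uIcc 0 t) := by
    rw [hG]
    apply ContinuousOn.smul (f := fun s => Real.exp (c * s)) (g := fun s => (Q s).comp (S s))
    · exact (Real.continuous_exp.comp (continuous_const.mul continuous_id)).continuousOn
    · exact hQcont.clm_comp ((hRcont.sub continuous_const).continuousOn)
  have hint : IntervalIntegrable G volume 0 t := hGcont.intervalIntegrable
  have hFTC : ∫ s in (0:ℝ)..t, G s = F t - F 0 :=
    intervalIntegral.integral_eq_sub_of_hasDerivAt hFd hint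
  have hF0 : F 0 = 0 := by
    simp [hF, hQ0]
  have hbd : ∀ s ∈ Set.uIoc (0:ℝ) t, ‖G s‖ ≤ Real.exp (d * s) * d := by
    intro s hsmem
    rw [Set.uIoc_of_le ht] at hsmem
    have hs : 0 ≤ s := le_of_lt hsmem.1
    have h1 : ‖G s‖ = Real.exp (c * s) * ‖(Q s).comp (S s)‖ := by
      rw [show G s = Real.exp (c * s) • ((Q s).comp (S s)) from rfl, norm_smul (Real.exp (c * s)) ((Q s).comp (S s)), Real.norm_eq_abs, abs_of_pos (Real.exp_pos _)]
    have h2 : ‖(Q s).comp (S s)‖ ≤ Real.exp (-k₁ * s) * d :=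
      le_trans (ContinuousLinearMap.opNorm_comp_le _ _)
        (mul_le_mul (hQn s hs) (hSnorm s hs) (norm_nonneg _) (Real.exp_pos _).le)
    have h3 : Real.exp (c * s) * (Real.exp (-k₁ * s) * d) = Real.exp (d * s) * d := by
      rw [← mul_assoc, ← Real.exp_add]
      congr 2
      rw [hc, hd]; ring
    rw [h1, ← h3]
    exact mul_le_mul_of_nonneg_left h2 (Real.exp_pos _).le
  have hbint : IntervalIntegrable (fun s => Real.exp (d * s) * d) volume 0 t := by
    apply Continuous.intervalIntegrable
    continuity
  have hbFTC : ∫ s in (0:ℝ)..t, Real.exp (d * s) * d = Real.exp (d * t) - 1 := by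
    have hder : ∀ s ∈ Set.uIcc (0:ℝ) t,
        HasDerivAt (fun y => Real.exp (d * y)) (Real.exp (d * s) * d) s := by
      intro s _
      have h1 : HasDerivAt (fun y : ℝ => d * y) d s := by
        simpa using (hasDerivAt_id s).const_mul d
      simpa [Function.comp_def] using (Real.hasDerivAt_exp (d * s)).comp s h1
    have := intervalIntegral.integral_eq_sub_of_hasDerivAt hder hbint
    simpa using this
  have hnorm : ‖∫ s in (0:ℝ)..t, G s‖ ≤ |∫ s in (0:ℝ)..t, Real.exp (d * s) * d| := by
    apply intervalIntegral.norm_integral_le_abs_of_norm_le _ hbint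
    exact (ae_restrict_iff' measurableSet_uIoc).mpr (Filter.Eventually.of_forall hbd)
  have habs : |∫ s in (0:ℝ)..t, Real.exp (d * s) * d| = Real.exp (d * t) - 1 := by
    rw [hbFTC, abs_of_nonneg]
    have : Real.exp (0:ℝ) ≤ Real.exp (d * t) := Real.exp_le_exp.mpr (by positivity)
    simpa using this
  have : ‖F t‖ ≤ Real.exp (d * t) - 1 := by
    rw [show F t = F t - F 0 by rw [hF0, sub_zero], ← hFTC]
    exact hnorm.trans_eq habs
  exact this
end

section
/- Let $Q_t$ solve $Q_t' = -Q_t R(t)$, $Q_0 = \mathrm{id}$, on a finite-dimensional inner product space $V$, with $R(t)$ symmetric and $k_1 \le R(t) \le k_2$. Then for any unit-speed data $X, Y \in V$ and any $t \ge 0$: $|2X - Q_t Y|^2 \le 4 e^{\frac{k_2-k_1}{2}t}|X|^2 - 4 e^{-k_1 t}\langle X, Y\rangle + e^{-2k_1 t}|Y|^2$. -/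
open Real Filter
open scoped RealInnerProductSpace


theorem sym_norm_le_s5 {V : Type*} [NormedAddCommGroup V] [InnerProductSpace ℝ V]
    (A : V →L[ℝ] V) (hA : ∀ u v : V, ⟪A u, v⟫ = ⟪u, A v⟫) {δ : ℝ} (hδ : 0 ≤ δ)
    (h : ∀ v : V, |⟪A v, v⟫| ≤ δ * ‖v‖ ^ 2) : ‖A‖ ≤ δ := by
  apply ContinuousLinearMap.opNorm_le_bound _ hδ
  intro u
  by_cases hu : A u = 0
  · simp [hu]; positivity
  have hAu : ‖A u‖ ≠ 0 := norm_ne_zero_iff.mpr hu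
  set w : V := (‖u‖ / ‖A u‖) • A u with hw
  have hAuw : ⟪A u, w⟫ = ‖u‖ * ‖A u‖ := by
    rw [hw, real_inner_smul_right, real_inner_self_eq_norm_sq]
    field_simp [hAu]
    try ring
  have hnw : ‖w‖ = ‖u‖ := by
    rw [hw, norm_smul]
    simp [abs_div, abs_of_nonneg (norm_nonneg u)]
    field_simp [hAu]
    try ring
  have key : 4 * ⟪A u, w⟫ = ⟪A (u + w), u + w⟫ - ⟪A (u - w), u - w⟫ := by
    have h1 := hA u w
    simp only [map_add, map_sub, inner_add_left, inner_add_right, inner_sub_left,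
      inner_sub_right]
    have h2 : ⟪A w, u⟫ = ⟪A u, w⟫ := by rw [hA w u, real_inner_comm]
    linarith
  have b1 := (abs_le.mp (h (u + w))).2
  have b2 := (abs_le.mp (h (u - w))).1
  have par : ‖u + w‖ ^ 2 + ‖u - w‖ ^ 2 = 2 * ‖u‖ ^ 2 + 2 * ‖w‖ ^ 2 := by
    have := norm_add_sq_real u w
    have := norm_sub_sq_real u w
    linarith
  have : 4 * (‖u‖ * ‖A u‖) ≤ 4 * (δ * ‖u‖ ^ 2) := by
    rw [← hAuw]
    calc 4 * ⟪A u, w⟫ = ⟪A (u + w), u + w⟫ - ⟪A (u - w), u - w⟫ := key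
      _ ≤ δ * ‖u + w‖ ^ 2 + δ * ‖u - w‖ ^ 2 := by linarith
      _ = δ * (‖u + w‖ ^ 2 + ‖u - w‖ ^ 2) := by ring
      _ = 4 * (δ * ‖u‖ ^ 2) := by rw [par, hnw]; ring
  rcases eq_or_lt_of_le (norm_nonneg u) with h0 | h0
  · exact absurd (by rw [show u = 0 from norm_eq_zero.mp h0.symm, map_zero]) hu
  · nlinarith

theorem key_gronwall
    {V : Type*} [NormedAddCommGroup V] [InnerProductSpace ℝ V] [FiniteDimensional ℝ V]
    (k₁ k₂ : ℝ) (hk : k₁ ≤ k₂)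
    (R Q : ℝ → (V →L[ℝ] V))
    (hRsym : ∀ t, 0 ≤ t → ∀ u v : V, ⟪R t u, v⟫ = ⟪u, R t v⟫)
    (hRlow : ∀ t, 0 ≤ t → ∀ v : V, k₁ * ‖v‖ ^ 2 ≤ ⟪R t v, v⟫)
    (hRup : ∀ t, 0 ≤ t → ∀ v : V, ⟪R t v, v⟫ ≤ k₂ * ‖v‖ ^ 2)
    (hQ0 : Q 0 = ContinuousLinearMap.id ℝ V)
    (hQ : ∀ t, 0 ≤ t → HasDerivAt Q (-((Q t).comp (R t))) t) :
    ∀ t, 0 ≤ t →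
      ‖Real.exp ((k₁ + k₂) / 2 * t) • Q t - ContinuousLinearMap.id ℝ V‖ ≤
        Real.exp ((k₂ - k₁) / 2 * t) - 1 := by
  set μ := (k₁ + k₂) / 2 with hμ
  set δ := (k₂ - k₁) / 2 with hδdef
  have hδ0 : 0 ≤ δ := by rw [hδdef]; linarith
  set h : ℝ → (V →L[ℝ] V) := fun s => Real.exp (μ * s) • Q s - ContinuousLinearMap.id ℝ V
    with hh
  set h' : ℝ → (V →L[ℝ] V) :=
    fun s => Real.exp (μ * s) • ((Q s).comp (μ • ContinuousLinearMap.id ℝ V - R s)) with hh'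
  have hderiv : ∀ s, 0 ≤ s → HasDerivAt h (h' s) s := by
    intro s hs
    have hc : HasDerivAt (fun s : ℝ => Real.exp (μ * s)) (Real.exp (μ * s) * μ) s := by
      have : HasDerivAt (fun s : ℝ => μ * s) μ s := by
        simpa using (hasDerivAt_id s).const_mul μ
      exact this.exp
    have := (hc.smul (hQ s hs)).sub_const (ContinuousLinearMap.id ℝ V)
    convert this using 1
    · rfl
    · rfl
    · rfl
    · rfl
    rw [hh']
    ext v
    simp [ContinuousLinearMap.comp_sub, smul_sub, smul_smul, map_sub, map_smul, smul_add,
      mul_comm]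
    module
  have hAnorm : ∀ s, 0 ≤ s → ‖μ • ContinuousLinearMap.id ℝ V - R s‖ ≤ δ := by
    intro s hs
    apply sym_norm_le_s5 _ _ hδ0
    · intro v
      have h1 := hRlow s hs v
      have h2 := hRup s hs v
      have : ⟪(μ • ContinuousLinearMap.id ℝ V - R s) v, v⟫ = μ * ‖v‖ ^ 2 - ⟪R s v, v⟫ := by
        simp [inner_sub_left, real_inner_smul_left, real_inner_self_eq_norm_sq]
        try ring
      rw [this]
      refine abs_le.mpr ⟨by nlinarith, by nlinarith⟩
    · intro u v
      simp only [ContinuousLinearMap.sub_apply, ContinuousLinearMap.smul_apply,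
        ContinuousLinearMap.id_apply, inner_sub_left, inner_sub_right, real_inner_smul_left,
        real_inner_smul_right, hRsym s hs u v, real_inner_comm u v]
  intro t ht
  have hbound : ∀ s ∈ Set.Ico 0 t, ‖h' s‖ ≤ δ * ‖h s‖ + δ := by
    intro s hs
    have hs0 : (0:ℝ) ≤ s := hs.1
    have e1 : ‖h' s‖ ≤ Real.exp (μ * s) * ‖Q s‖ * δ := by
      rw [hh']
      have h9 := norm_smul (Real.exp (μ * s)) ((Q s).comp (μ • ContinuousLinearMap.id ℝ V - R s))
      rw [h9, Real.norm_eq_abs, abs_of_pos (Real.exp_pos _), mul_assoc]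
      refine mul_le_mul_of_nonneg_left ?_ (le_of_lt (Real.exp_pos _))
      calc ‖(Q s).comp (μ • ContinuousLinearMap.id ℝ V - R s)‖ ≤
          ‖Q s‖ * ‖μ • ContinuousLinearMap.id ℝ V - R s‖ := ContinuousLinearMap.opNorm_comp_le _ _
        _ ≤ ‖Q s‖ * δ := by gcongr; exact hAnorm s hs0
    have e2 : Real.exp (μ * s) * ‖Q s‖ ≤ ‖h s‖ + 1 := by
      have hns : Real.exp (μ * s) * ‖Q s‖ = ‖Real.exp (μ * s) • Q s‖ := by
        have h9 := norm_smul (Real.exp (μ * s)) (Q s)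
        rw [h9, Real.norm_eq_abs, abs_of_pos (Real.exp_pos _)]
      rw [hns]
      calc ‖Real.exp (μ * s) • Q s‖ = ‖h s + ContinuousLinearMap.id ℝ V‖ := by
            rw [hh]; simp
        _ ≤ ‖h s‖ + ‖ContinuousLinearMap.id ℝ V‖ := norm_add_le _ _
        _ ≤ ‖h s‖ + 1 := by gcongr; exact ContinuousLinearMap.norm_id_le
    calc ‖h' s‖ ≤ Real.exp (μ * s) * ‖Q s‖ * δ := e1
      _ ≤ (‖h s‖ + 1) * δ := by gcongr
      _ = δ * ‖h s‖ + δ := by ring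
  have hcont : ContinuousOn h (Set.Icc 0 t) := fun s hs =>
    ((hderiv s hs.1).continuousAt).continuousWithinAt
  have h0 : ‖h 0‖ ≤ 0 := by rw [hh]; simp [hQ0]
  have := norm_le_gronwallBound_of_norm_deriv_right_le hcont
    (fun s hs => (hderiv s hs.1).hasDerivWithinAt) h0 hbound t (Set.mem_Icc.mpr ⟨ht, le_refl t⟩)
  refine this.trans ?_
  rcases eq_or_lt_of_le hδ0 with h1 | h1
  · rw [← h1, sub_zero]
    simp [gronwallBound_K0, ← h1]
  · rw [gronwallBound_of_K_ne_0 (ne_of_gt h1)]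
    rw [sub_zero]
    have : δ / δ = 1 := div_self (ne_of_gt h1)
    rw [this]
    ring_nf
    rw [mul_comm]

/-- If `Q` solves `Q' = -Q ∘ R`, `Q 0 = id`, with each `R t` symmetric and `k₁ ≤ R t ≤ k₂`
as quadratic forms, then for all vectors `X Y` and `t ≥ 0`,
`|2X - Q t Y|² ≤ 4 e^{(k₂-k₁)t/2}|X|² - 4 e^{-k₁ t}⟨X,Y⟩ + e^{-2k₁ t}|Y|²`. -/
theorem two_smul_sub_Q_sq_bound
    {V : Type*} [NormedAddCommGroup V] [InnerProductSpace ℝ V] [FiniteDimensional ℝ V]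
    (k₁ k₂ : ℝ) (hk : k₁ ≤ k₂)
    (R Q : ℝ → (V →L[ℝ] V)) (hRcont : Continuous R)
    (hRsym : ∀ t, 0 ≤ t → ∀ u v : V, ⟪R t u, v⟫ = ⟪u, R t v⟫)
    (hRlow : ∀ t, 0 ≤ t → ∀ v : V, k₁ * ‖v‖ ^ 2 ≤ ⟪R t v, v⟫)
    (hRup : ∀ t, 0 ≤ t → ∀ v : V, ⟪R t v, v⟫ ≤ k₂ * ‖v‖ ^ 2)
    (hQ0 : Q 0 = ContinuousLinearMap.id ℝ V)
    (hQ : ∀ t, 0 ≤ t → HasDerivAt Q (-((Q t).comp (R t))) t) :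
    ∀ t, 0 ≤ t → ∀ X Y : V,
      ‖(2 : ℝ) • X - Q t Y‖ ^ 2 ≤
        4 * Real.exp ((k₂ - k₁) / 2 * t) * ‖X‖ ^ 2 -
          4 * Real.exp (-k₁ * t) * ⟪X, Y⟫ + Real.exp (-2 * k₁ * t) * ‖Y‖ ^ 2 := by
  intro t ht X Y
  have hkey := key_gronwall k₁ k₂ hk R Q hRsym hRlow hRup hQ0 hQ t ht
  set μ : ℝ := (k₁ + k₂) / 2 with hμ
  set ε : ℝ := Real.exp ((k₂ - k₁) / 2 * t) - 1 with hε
  have hε0 : 0 ≤ ε := by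
    rw [hε]
    have : (1:ℝ) ≤ Real.exp ((k₂ - k₁) / 2 * t) := by
      rw [← Real.exp_zero]
      apply Real.exp_le_exp.mpr
      have : 0 ≤ (k₂ - k₁) / 2 := by linarith
      positivity
    linarith
  set c : ℝ := Real.exp (-(μ * t)) with hc
  have hc0 : 0 < c := Real.exp_pos _
  have hcE : c * Real.exp (μ * t) = 1 := by
    rw [hc, ← Real.exp_add]; simp
  -- bound on the perturbation
  have hPY : ‖Real.exp (μ * t) • Q t Y - Y‖ ≤ ε * ‖Y‖ := by
    have h1 : Real.exp (μ * t) • Q t Y - Y =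
        (Real.exp (μ * t) • Q t - ContinuousLinearMap.id ℝ V) Y := by
      simp
    rw [h1]
    calc ‖(Real.exp (μ * t) • Q t - ContinuousLinearMap.id ℝ V) Y‖ ≤
        ‖Real.exp (μ * t) • Q t - ContinuousLinearMap.id ℝ V‖ * ‖Y‖ :=
          ContinuousLinearMap.le_opNorm _ _
      _ ≤ ε * ‖Y‖ := by gcongr
  set a : ℝ := ‖(2 : ℝ) • X - c • Y‖ with ha
  set b : ℝ := c * ‖Y‖ with hb
  have hb0 : 0 ≤ b := mul_nonneg hc0.le (norm_nonneg _)
  have ha0 : 0 ≤ a := norm_nonneg _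
  -- step 1
  have step1 : ‖(2 : ℝ) • X - Q t Y‖ ≤ a + ε * b := by
    have hsplit : (2 : ℝ) • X - Q t Y =
        ((2 : ℝ) • X - c • Y) - c • (Real.exp (μ * t) • Q t Y - Y) := by
      rw [smul_sub, smul_smul, hcE, one_smul]
      abel
    rw [hsplit]
    calc ‖((2 : ℝ) • X - c • Y) - c • (Real.exp (μ * t) • Q t Y - Y)‖ ≤
        a + ‖c • (Real.exp (μ * t) • Q t Y - Y)‖ := norm_sub_le _ _
      _ ≤ a + ε * b := by
          have : ‖c • (Real.exp (μ * t) • Q t Y - Y)‖ =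
              c * ‖Real.exp (μ * t) • Q t Y - Y‖ := by
            rw [norm_smul, Real.norm_eq_abs, abs_of_pos hc0]
          rw [this]
          have h2 : c * ‖Real.exp (μ * t) • Q t Y - Y‖ ≤ c * (ε * ‖Y‖) :=
            mul_le_mul_of_nonneg_left hPY hc0.le
          have h3 : c * (ε * ‖Y‖) = ε * b := by rw [hb]; ring
          linarith
  -- step 2 : expand a²
  have step2 : a ^ 2 = 4 * ‖X‖ ^ 2 - 4 * c * ⟪X, Y⟫ + c ^ 2 * ‖Y‖ ^ 2 := by
    rw [ha, norm_sub_sq_real, norm_smul, norm_smul, real_inner_smul_left, real_inner_smul_right]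
    simp [Real.norm_eq_abs, abs_of_pos hc0]
    ring
  -- step 3 : rewrite RHS exponentials
  have hexp1 : Real.exp (-k₁ * t) = (1 + ε) * c := by
    rw [hε, hc]
    have : (1:ℝ) + (Real.exp ((k₂ - k₁) / 2 * t) - 1) = Real.exp ((k₂ - k₁) / 2 * t) := by ring
    rw [this, ← Real.exp_add]
    congr 1
    rw [hμ]; ring
  have hexp2 : Real.exp (-2 * k₁ * t) = ((1 + ε) * c) ^ 2 := by
    rw [← hexp1, sq, ← Real.exp_add]
    congr 1
    ring
  have hexp3 : Real.exp ((k₂ - k₁) / 2 * t) = 1 + ε := by rw [hε]; ring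
  rw [hexp1, hexp2, hexp3]
  -- final nlinarith
  have key : (a + ε * b) ^ 2 ≤ (1 + ε) * a ^ 2 + (ε + ε ^ 2) * b ^ 2 := by
    nlinarith [mul_nonneg hε0 (sq_nonneg (a - b))]
  have hL : ‖(2 : ℝ) • X - Q t Y‖ ^ 2 ≤ (a + ε * b) ^ 2 :=
    pow_le_pow_left₀ (norm_nonneg _) step1 2
  have hbsq : b ^ 2 = c ^ 2 * ‖Y‖ ^ 2 := by rw [hb]; ring
  have hRHS : 4 * (1 + ε) * ‖X‖ ^ 2 - 4 * ((1 + ε) * c) * ⟪X, Y⟫ +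
      ((1 + ε) * c) ^ 2 * ‖Y‖ ^ 2 = (1 + ε) * a ^ 2 + (ε + ε ^ 2) * b ^ 2 := by
    rw [step2, hbsq]; ring
  linarith [hL, key]
end

section
/- (Combined estimate \eqref{Eq:Estimate}.) Let $V$ be a finite-dimensional inner product space, $Q_t$ solve $Q'=-QR$ with $Q_0=\mathrm{id}$, $R(t)$ symmetric, $k_1 \le R(t) \le k_2$. Then for any $a,b \in \mathbb{R}$ with $a+b=1$ and any $u, v, y \in V$ (playing the roles of $\nabla f$, $\nabla P_t f$, $\sslash^{-1}\nabla f(X_t)$): $|Q_t y|^2 - e^{-2k_1 t}|y|^2 \le 4\big[(e^{\frac{k_2-k_1}{2}t}-1)|au+bv|^2 + \langle au+bv, Q_t y - e^{-k_1 t} y\rangle\big]$. -/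
set_option maxHeartbeats 1000000

open Real Filter Set
open scoped RealInnerProductSpace

/-- Cauchy–Schwarz for a nonnegative symmetric bilinear form given by an operator. -/
lemma psd_inner_sq_le {V : Type*} [NormedAddCommGroup V] [InnerProductSpace ℝ V]
    (T : V →L[ℝ] V) (hsym : ∀ x y : V, ⟪T x, y⟫ = ⟪x, T y⟫)
    (hpos : ∀ x : V, 0 ≤ ⟪T x, x⟫) (x y : V) :
    ⟪T x, y⟫ ^ 2 ≤ ⟪T x, x⟫ * ⟪T y, y⟫ := by
  have key : ∀ l : ℝ, 0 ≤ ⟪T y, y⟫ * (l * l) + (2 * ⟪T x, y⟫) * l + ⟪T x, x⟫ := by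
    intro l
    have h := hpos (x + l • y)
    have hexp : ⟪T (x + l • y), x + l • y⟫
        = ⟪T x, x⟫ + l * ⟪T x, y⟫ + l * ⟪T y, x⟫ + l * l * ⟪T y, y⟫ := by
      simp [map_add, map_smul, inner_add_left, inner_add_right, real_inner_smul_left,
        real_inner_smul_right]
      ring
    have hxy : ⟪T y, x⟫ = ⟪T x, y⟫ := by rw [hsym y x, real_inner_comm]
    rw [hexp, hxy] at h
    nlinarith [h]
  have hd := discrim_le_zero key
  rw [discrim] at hd
  nlinarith [hd]

/-- The key estimate for a "forward" flow `φ' = -S φ` with `0 ≤ S ≤ K`. -/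
lemma forward_key {V : Type*} [NormedAddCommGroup V] [InnerProductSpace ℝ V]
    {K T : ℝ} (hK : 0 ≤ K) (hT : 0 < T)
    (S : ℝ → (V →L[ℝ] V)) (φ : ℝ → V) (y : V) (hφ0 : φ 0 = y)
    (hφ : ∀ s ∈ Icc (0:ℝ) T, HasDerivAt φ (-(S s (φ s))) s)
    (hsym : ∀ s ∈ Icc (0:ℝ) T, ∀ x z : V, ⟪S s x, z⟫ = ⟪x, S s z⟫)
    (hpos : ∀ s ∈ Icc (0:ℝ) T, ∀ x : V, 0 ≤ ⟪S s x, x⟫)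
    (hup : ∀ s ∈ Icc (0:ℝ) T, ∀ x : V, ⟪S s x, x⟫ ≤ K * ‖x‖ ^ 2) :
    ‖y - φ T‖ ^ 2 ≤ (Real.exp (K / 2 * T) - 1) * (‖y‖ ^ 2 - ‖φ T‖ ^ 2)
      ∧ ‖φ T‖ ≤ ‖y‖ := by
  have hTmem : T ∈ Icc (0:ℝ) T := ⟨le_of_lt hT, le_refl T⟩
  -- ‖S s x‖² ≤ K ⟪S s x, x⟫
  have hSnorm : ∀ s ∈ Icc (0:ℝ) T, ∀ x : V, ‖S s x‖ ^ 2 ≤ K * ⟪S s x, x⟫ := by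
    intro s hs x
    have hcs := psd_inner_sq_le (S s) (hsym s hs) (hpos s hs) x (S s x)
    have h1 : ⟪S s x, S s x⟫ = ‖S s x‖ ^ 2 := real_inner_self_eq_norm_sq _
    have h2 : ⟪S s (S s x), S s x⟫ ≤ K * ‖S s x‖ ^ 2 := hup s hs _
    have h3 : 0 ≤ ⟪S s x, x⟫ := hpos s hs x
    rw [h1] at hcs
    rcases eq_or_lt_of_le (sq_nonneg ‖S s x‖) with h0 | h0
    · nlinarith [h3, hK]
    · nlinarith [hcs, h2, h3, h0]
  set p : ℝ → ℝ := fun s => ‖y‖ ^ 2 - ‖φ s‖ ^ 2 with hp_def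
  set q : ℝ → ℝ := fun s => ‖y - φ s‖ ^ 2 with hq_def
  have hp' : ∀ s ∈ Icc (0:ℝ) T, HasDerivAt p (2 * ⟪S s (φ s), φ s⟫) s := by
    intro s hs
    have h := ((hφ s hs).norm_sq).const_sub (‖y‖ ^ 2)
    refine h.congr_deriv ?_
    rw [inner_neg_right, real_inner_comm]
    ring
  have hq' : ∀ s ∈ Icc (0:ℝ) T, HasDerivAt q (2 * ⟪y - φ s, S s (φ s)⟫) s := by
    intro s hs
    have hd : HasDerivAt (fun s => y - φ s) (-(-(S s (φ s)))) s := (hφ s hs).const_sub y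
    rw [neg_neg] at hd
    exact hd.norm_sq
  have hpcont : ContinuousOn p (Icc 0 T) :=
    fun s hs => ((hp' s hs).continuousAt).continuousWithinAt
  have hqcont : ContinuousOn q (Icc 0 T) :=
    fun s hs => ((hq' s hs).continuousAt).continuousWithinAt
  have hpmono : MonotoneOn p (Icc 0 T) := by
    apply monotoneOn_of_deriv_nonneg (convex_Icc 0 T) hpcont
    · intro x hx
      rw [interior_Icc] at hx
      exact ((hp' x (Ioo_subset_Icc_self hx)).differentiableAt).differentiableWithinAt
    · intro x hx
      rw [interior_Icc] at hx
      rw [(hp' x (Ioo_subset_Icc_self hx)).deriv]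
      have := hpos x (Ioo_subset_Icc_self hx) (φ x)
      linarith
  have hp0 : p 0 = 0 := by simp [hp_def, hφ0]
  have hpnn : ∀ s ∈ Icc (0:ℝ) T, 0 ≤ p s := by
    intro s hs
    have := hpmono (left_mem_Icc.2 (le_of_lt hT)) hs hs.1
    rw [hp0] at this; exact this
  have hφle : ∀ s ∈ Icc (0:ℝ) T, ‖φ s‖ ≤ ‖y‖ := by
    intro s hs
    have h := hpnn s hs
    simp only [hp_def] at h
    have h2 : ‖φ s‖ ^ 2 ≤ ‖y‖ ^ 2 := by linarith
    exact (pow_le_pow_iff_left₀ (norm_nonneg _) (norm_nonneg _) (by norm_num)).1 h2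
  -- derivative bound
  have hdb : ∀ s ∈ Icc (0:ℝ) T, ‖-(S s (φ s))‖ ≤ K * ‖y‖ := by
    intro s hs
    rw [norm_neg]
    have h1 := hSnorm s hs (φ s)
    have h2 : ⟪S s (φ s), φ s⟫ ≤ K * ‖φ s‖ ^ 2 := hup s hs _
    have h3 := hφle s hs
    have hy2 : ‖φ s‖ ^ 2 ≤ ‖y‖ ^ 2 := by
      nlinarith [mul_self_le_mul_self (norm_nonneg (φ s)) h3]
    have h4 : ‖S s (φ s)‖ ^ 2 ≤ (K * ‖y‖) ^ 2 := by
      nlinarith [mul_le_mul_of_nonneg_left h2 hK,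
        mul_le_mul_of_nonneg_left hy2 (mul_nonneg hK hK)]
    exact (pow_le_pow_iff_left₀ (norm_nonneg _) (by positivity) (by norm_num)).1 h4
  have hqbound : ∀ s ∈ Icc (0:ℝ) T, q s ≤ (K * ‖y‖) ^ 2 * s ^ 2 := by
    intro s hs
    have := norm_image_sub_le_of_norm_deriv_le_segment'
      (f := φ) (f' := fun s => -(S s (φ s))) (a := 0) (b := T) (C := K * ‖y‖)
      (fun x hx => (hφ x hx).hasDerivWithinAt) (fun x hx => hdb x (Ico_subset_Icc_self hx))
      s hs
    have h2 : ‖y - φ s‖ ≤ K * ‖y‖ * s := by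
      rw [norm_sub_rev]
      calc ‖φ s - y‖ = ‖φ s - φ 0‖ := by rw [hφ0]
        _ ≤ K * ‖y‖ * (s - 0) := this
        _ = K * ‖y‖ * s := by ring
    have h3 : 0 ≤ K * ‖y‖ * s := mul_nonneg (mul_nonneg hK (norm_nonneg y)) hs.1
    calc q s = ‖y - φ s‖ ^ 2 := rfl
      _ ≤ (K * ‖y‖ * s) ^ 2 := by
            nlinarith [mul_self_le_mul_self (norm_nonneg (y - φ s)) h2]
      _ = (K * ‖y‖) ^ 2 * s ^ 2 := by ring
  refine ⟨?_, hφle T hTmem⟩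
  rcases eq_or_lt_of_le hK with hK0 | hKpos
  · -- K = 0 : φ T = y
    have h := hqbound T hTmem
    rw [← hK0] at h
    simp at h
    have : q T ≤ 0 := by simpa using h
    have hq0 : q T = 0 := le_antisymm this (sq_nonneg _)
    calc ‖y - φ T‖ ^ 2 = q T := rfl
      _ = 0 := hq0
      _ ≤ (Real.exp (K / 2 * T) - 1) * (‖y‖ ^ 2 - ‖φ T‖ ^ 2) := by
          apply mul_nonneg
          · have h1 : (0:ℝ) ≤ K / 2 * T := by
              rw [← hK0]
              norm_num
            have := Real.add_one_le_exp (K / 2 * T)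
            linarith
          · exact hpnn T hTmem
  · -- K > 0
    set lam : ℝ → ℝ := fun s => Real.exp (K / 2 * s) with hlam_def
    have hlam' : ∀ s : ℝ, HasDerivAt (fun s => lam s - 1) (K / 2 * lam s) s := by
      intro s
      have h1 : HasDerivAt (fun s : ℝ => K / 2 * s) (K / 2) s := by
        simpa using (hasDerivAt_id s).const_mul (K / 2)
      have := h1.exp
      refine (this.sub_const 1).congr_deriv ?_
      simp only [hlam_def]
      ring
    have hlampos : ∀ s : ℝ, 0 < s → 1 < lam s := by
      intro s hs
      apply Real.one_lt_exp_iff.2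
      positivity
    set θ : ℝ → ℝ := fun s => q s / (lam s - 1) with hθ_def
    -- main monotonicity on [ε, T]
    have hmain : ∀ ε, 0 < ε → ε ≤ T → p T - θ T ≥ p ε - θ ε := by
      intro ε hε hεT
      have hsub : Icc ε T ⊆ Icc 0 T := Icc_subset_Icc (le_of_lt hε) le_rfl
      have hne : ∀ s ∈ Icc ε T, lam s - 1 ≠ 0 := by
        intro s hs
        have := hlampos s (lt_of_lt_of_le hε hs.1)
        linarith
      have hθd : ∀ x ∈ Ioo ε T, HasDerivAt θ
          ((2 * ⟪y - φ x, S x (φ x)⟫ * (lam x - 1) - q x * (K / 2 * lam x)) / (lam x - 1) ^ 2)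
          x := by
        intro x hx
        exact (hq' x (hsub (Ioo_subset_Icc_self hx))).div (hlam' x)
          (hne x (Ioo_subset_Icc_self hx))
      have hmono : MonotoneOn (fun s => p s - θ s) (Icc ε T) := by
        apply monotoneOn_of_deriv_nonneg (convex_Icc ε T)
        · apply ContinuousOn.sub (hpcont.mono hsub)
          exact ContinuousOn.div (hqcont.mono hsub)
            (Continuous.continuousOn (by
              exact (Real.continuous_exp.comp (continuous_const.mul continuous_id)).sub
                continuous_const)) hne
        · intro x hx
          rw [interior_Icc] at hx
          exact (((hp' x (hsub (Ioo_subset_Icc_self hx))).sub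
            (hθd x hx)).differentiableAt).differentiableWithinAt
        · intro x hx
          rw [interior_Icc] at hx
          have hxI : x ∈ Icc (0:ℝ) T := hsub (Ioo_subset_Icc_self hx)
          rw [show (fun s => p s - θ s) = p - θ from rfl, ((hp' x hxI).sub (hθd x hx)).deriv]
          set L := lam x with hL_def
          have hL : 1 < L := hlampos x (lt_of_lt_of_le hε (le_of_lt hx.1))
          set m2 := ⟪S x (φ x), φ x⟫ with hm2_def
          set X := ⟪y - φ x, S x (φ x)⟫ with hX_def
          have hm2 : 0 ≤ m2 := hpos x hxI (φ x)
          have hqq : 0 ≤ q x := sq_nonneg _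
          have hX2 : X ^ 2 ≤ m2 * (K * q x) := by
            have hcs := psd_inner_sq_le (S x) (hsym x hxI) (hpos x hxI) (φ x) (y - φ x)
            have h2 : ⟪S x (y - φ x), y - φ x⟫ ≤ K * ‖y - φ x‖ ^ 2 := hup x hxI _
            have hXc : X = ⟪S x (φ x), y - φ x⟫ := real_inner_comm _ _
            rw [hXc]
            calc ⟪S x (φ x), y - φ x⟫ ^ 2 ≤ m2 * ⟪S x (y - φ x), y - φ x⟫ := hcs
              _ ≤ m2 * (K * q x) := by
                  apply mul_le_mul_of_nonneg_left _ hm2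
                  exact h2
          have hkey : 2 * X * (L - 1) - q x * (K / 2 * L) ≤ 2 * m2 * (L - 1) ^ 2 := by
            have hA : 0 ≤ 2 * m2 * (L - 1) ^ 2 :=
              mul_nonneg (mul_nonneg (by norm_num) hm2) (sq_nonneg _)
            have hB : 0 ≤ K * q x / 2 := by
              have := mul_nonneg hKpos.le hqq
              linarith
            have hYAB : (2 * X * (L - 1)) ^ 2
                ≤ 4 * (2 * m2 * (L - 1) ^ 2) * (K * q x / 2) := by
              nlinarith [mul_le_mul_of_nonneg_left hX2
                (show (0:ℝ) ≤ 4 * (L - 1) ^ 2 by positivity)]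
            have hYle : 2 * X * (L - 1) ≤ 2 * m2 * (L - 1) ^ 2 + K * q x / 2 := by
              nlinarith [hYAB, sq_nonneg (2 * m2 * (L - 1) ^ 2 - K * q x / 2), hA, hB]
            have hBL : K * q x / 2 ≤ q x * (K / 2 * L) := by
              nlinarith [mul_nonneg (mul_nonneg (le_of_lt hKpos) hqq)
                (sub_nonneg.2 (le_of_lt hL))]
            linarith
          have hL2 : (0:ℝ) < (L - 1) ^ 2 := pow_pos (sub_pos.2 hL) 2
          rw [sub_nonneg]
          rw [div_le_iff₀ hL2]
          nlinarith [hkey]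
      have h1 := hmono (mem_Icc.2 ⟨le_refl ε, hεT⟩) (mem_Icc.2 ⟨hεT, le_refl T⟩) hεT
      simpa using h1
    have hθε : ∀ ε, 0 < ε → ε ≤ T → θ ε ≤ 2 * K * ‖y‖ ^ 2 * ε := by
      intro ε hε hεT
      have hq := hqbound ε (mem_Icc.2 ⟨hε.le, hεT⟩)
      have hlam : K / 2 * ε ≤ lam ε - 1 := by
        have h := Real.add_one_le_exp (K / 2 * ε)
        simp only [hlam_def]
        linarith
      have hlampos' : 0 < lam ε - 1 :=
        lt_of_lt_of_le (mul_pos (div_pos hKpos two_pos) hε) hlam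
      rw [hθ_def]
      rw [div_le_iff₀ hlampos']
      calc q ε ≤ (K * ‖y‖) ^ 2 * ε ^ 2 := hq
        _ = (2 * K * ‖y‖ ^ 2 * ε) * (K / 2 * ε) := by ring
        _ ≤ (2 * K * ‖y‖ ^ 2 * ε) * (lam ε - 1) := by
            apply mul_le_mul_of_nonneg_left hlam
            have h0 : (0:ℝ) ≤ 2 * K := by linarith
            exact mul_nonneg (mul_nonneg h0 (pow_nonneg (norm_nonneg y) 2)) hε.le
    have habs : ∀ ε, 0 < ε → ε ≤ T → θ T - p T ≤ 2 * K * ‖y‖ ^ 2 * ε := by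
      intro ε h1 h2
      have h0 := hmain ε h1 h2
      have h3 : 0 ≤ p ε := hpnn ε (mem_Icc.2 ⟨h1.le, h2⟩)
      have h4 := hθε ε h1 h2
      linarith
    have hfin : θ T ≤ p T := by
      by_contra hcon
      push_neg at hcon
      have hc0 : (0:ℝ) ≤ 2 * K * ‖y‖ ^ 2 :=
        mul_nonneg (mul_nonneg (by norm_num) hKpos.le) (pow_nonneg (norm_nonneg y) 2)
      have hc1 : (0:ℝ) < 2 * (2 * K * ‖y‖ ^ 2) + 1 := by nlinarith
      have hd0 : 0 < θ T - p T := sub_pos.2 hcon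
      have hε1 : 0 < min T ((θ T - p T) / (2 * (2 * K * ‖y‖ ^ 2) + 1)) :=
        lt_min hT (div_pos hd0 hc1)
      have h := habs _ hε1 (min_le_left _ _)
      have h2 : 2 * K * ‖y‖ ^ 2 * min T ((θ T - p T) / (2 * (2 * K * ‖y‖ ^ 2) + 1))
          ≤ 2 * K * ‖y‖ ^ 2 * ((θ T - p T) / (2 * (2 * K * ‖y‖ ^ 2) + 1)) :=
        mul_le_mul_of_nonneg_left (min_le_right _ _) hc0
      have h3 : 2 * K * ‖y‖ ^ 2 * ((θ T - p T) / (2 * (2 * K * ‖y‖ ^ 2) + 1))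
          ≤ (θ T - p T) / 2 := by
        have hmul := div_mul_cancel₀ (θ T - p T) hc1.ne'
        nlinarith [le_of_lt (div_pos hd0 hc1)]
      have h4 : θ T - p T ≤ (θ T - p T) / 2 := le_trans h (le_trans h2 h3)
      clear_value θ p q lam
      linarith only [h4, hd0]
    have hlamT : 0 < lam T - 1 := by have := hlampos T hT; linarith
    have hfin2 : q T ≤ (lam T - 1) * p T := by
      have h := mul_le_mul_of_nonneg_left hfin (le_of_lt hlamT)
      have heq : (lam T - 1) * θ T = q T := by
        rw [hθ_def]
        field_simp
      rw [heq] at h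
      exact h
    exact hfin2

/-- The adjoint of a differentiable operator family is differentiable. -/
lemma adjoint_hasDerivAt {V : Type*} [NormedAddCommGroup V] [InnerProductSpace ℝ V]
    [CompleteSpace V] {Q : ℝ → (V →L[ℝ] V)} {D : V →L[ℝ] V} {τ : ℝ}
    (h : HasDerivAt Q D τ) :
    HasDerivAt (fun s => ContinuousLinearMap.adjoint (Q s))
      (ContinuousLinearMap.adjoint D) τ := by
  let adjL : (V →L[ℝ] V) →ₗ[ℝ] (V →L[ℝ] V) :=
    { toFun := fun A => ContinuousLinearMap.adjoint A
      map_add' := fun A B => by simp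
      map_smul' := fun c A => by simp }
  let adjC : (V →L[ℝ] V) →L[ℝ] (V →L[ℝ] V) :=
    adjL.mkContinuous 1 (fun A => by
      simp only [adjL, LinearMap.coe_mk, AddHom.coe_mk, one_mul]
      exact le_of_eq (LinearIsometryEquiv.norm_map _ A))
  exact adjC.hasFDerivAt.comp_hasDerivAt τ h

/-- Combined estimate: if `Q` solves `Q' = -Q ∘ R`, `Q 0 = id`, with each `R t` symmetric
and `k₁ ≤ R t ≤ k₂` as quadratic forms, then for all `a + b = 1` and vectors `u v y`,
`|Q t y|² - e^{-2k₁t}|y|² ≤ 4[(e^{(k₂-k₁)t/2}-1)|au+bv|² + ⟨au+bv, Q t y - e^{-k₁t} y⟩]`. -/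
theorem Q_sq_sub_exp_bound
    {V : Type*} [NormedAddCommGroup V] [InnerProductSpace ℝ V] [FiniteDimensional ℝ V]
    (k₁ k₂ : ℝ) (hk : k₁ ≤ k₂)
    (R Q : ℝ → (V →L[ℝ] V)) (hRcont : Continuous R)
    (hRsym : ∀ t, 0 ≤ t → ∀ u v : V, ⟪R t u, v⟫ = ⟪u, R t v⟫)
    (hRlow : ∀ t, 0 ≤ t → ∀ v : V, k₁ * ‖v‖ ^ 2 ≤ ⟪R t v, v⟫)
    (hRup : ∀ t, 0 ≤ t → ∀ v : V, ⟪R t v, v⟫ ≤ k₂ * ‖v‖ ^ 2)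
    (hQ0 : Q 0 = ContinuousLinearMap.id ℝ V)
    (hQ : ∀ t, 0 ≤ t → HasDerivAt Q (-((Q t).comp (R t))) t) :
    ∀ t, 0 ≤ t → ∀ a b : ℝ, a + b = 1 → ∀ u v y : V,
      ‖Q t y‖ ^ 2 - Real.exp (-2 * k₁ * t) * ‖y‖ ^ 2 ≤
        4 * ((Real.exp ((k₂ - k₁) / 2 * t) - 1) * ‖a • u + b • v‖ ^ 2 +
          ⟪a • u + b • v, Q t y - Real.exp (-k₁ * t) • y⟫) := by
  -- the adjoint flow
  set P : ℝ → (V →L[ℝ] V) := fun s => ContinuousLinearMap.adjoint (Q s) with hP_def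
  have hRsa : ∀ s, 0 ≤ s → ContinuousLinearMap.adjoint (R s) = R s := fun s hs =>
    ((ContinuousLinearMap.eq_adjoint_iff (R s) (R s)).2 (hRsym s hs)).symm
  have hPd : ∀ s, 0 ≤ s → HasDerivAt P (-((R s).comp (P s))) s := by
    intro s hs
    have h := adjoint_hasDerivAt (hQ s hs)
    have heq : ContinuousLinearMap.adjoint (-((Q s).comp (R s))) = -((R s).comp (P s)) := by
      rw [map_neg, ContinuousLinearMap.adjoint_comp, hRsa s hs, hP_def]
    rwa [heq] at h
  have hP0 : P 0 = ContinuousLinearMap.id ℝ V := by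
    rw [hP_def]; simp [hQ0, ContinuousLinearMap.adjoint_id]
  have hPxd : ∀ x : V, ∀ s, 0 ≤ s →
      HasDerivAt (fun s => P s x) (-(R s (P s x))) s := by
    intro x s hs
    simpa using (hPd s hs).clm_apply (hasDerivAt_const s x)
  -- lower bound for the adjoint flow
  have hPlow : ∀ τ, 0 ≤ τ → ∀ x : V, ‖x‖ ^ 2 ≤ Real.exp (2 * k₂ * τ) * ‖P τ x‖ ^ 2 := by
    intro τ hτ x
    set g : ℝ → ℝ := fun s => Real.exp (2 * k₂ * s) * ‖P s x‖ ^ 2 with hg_def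
    have hgd : ∀ s, 0 ≤ s → HasDerivAt g
        (2 * k₂ * Real.exp (2 * k₂ * s) * ‖P s x‖ ^ 2
          + Real.exp (2 * k₂ * s) * (2 * ⟪P s x, -(R s (P s x))⟫)) s := by
      intro s hs
      have h1 : HasDerivAt (fun s : ℝ => Real.exp (2 * k₂ * s))
          (2 * k₂ * Real.exp (2 * k₂ * s)) s := by
        simpa [mul_comm] using ((hasDerivAt_id s).const_mul (2 * k₂)).exp
      have h2 := (hPxd x s hs).norm_sq
      exact h1.mul h2
    have hmono : MonotoneOn g (Icc 0 τ) := by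
      apply monotoneOn_of_deriv_nonneg (convex_Icc 0 τ)
      · intro s hs
        exact ((hgd s hs.1).continuousAt).continuousWithinAt
      · intro s hs
        rw [interior_Icc] at hs
        exact ((hgd s hs.1.le).differentiableAt).differentiableWithinAt
      · intro s hs
        rw [interior_Icc] at hs
        rw [(hgd s hs.1.le).deriv]
        have hup := hRup s hs.1.le (P s x)
        have hcomm : ⟪P s x, R s (P s x)⟫ = ⟪R s (P s x), P s x⟫ := real_inner_comm _ _
        have hexp : (0:ℝ) < Real.exp (2 * k₂ * s) := Real.exp_pos _
        rw [inner_neg_right]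
        nlinarith [hexp, hup, hcomm]
    have h0 : g 0 = ‖x‖ ^ 2 := by
      rw [hg_def]; simp [hP0]
    have h1 := hmono (left_mem_Icc.2 hτ) (right_mem_Icc.2 hτ) hτ
    rw [h0] at h1
    exact h1
  -- invertibility of Q τ
  have hUnit : ∀ τ, 0 ≤ τ → IsUnit (Q τ) := by
    intro τ hτ
    have hPinj : Function.Injective (P τ) := by
      intro x₁ x₂ hx
      have h0 : P τ (x₁ - x₂) = 0 := by rw [map_sub, hx, sub_self]
      have h1 := hPlow τ hτ (x₁ - x₂)
      rw [h0] at h1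
      simp only [norm_zero] at h1
      have h2 : ‖x₁ - x₂‖ ^ 2 ≤ 0 := by
        have : (0:ℝ) ^ 2 = 0 := by norm_num
        nlinarith [Real.exp_pos (2 * k₂ * τ)]
      have h3 : ‖x₁ - x₂‖ = 0 := by nlinarith [norm_nonneg (x₁ - x₂)]
      exact sub_eq_zero.1 (norm_eq_zero.1 h3)
    have hPsurj : Function.Surjective (P τ) := by
      have := LinearMap.injective_iff_surjective.mp
        (show Function.Injective ((P τ : V →ₗ[ℝ] V)) from hPinj)
      exact this
    have hQinj : Function.Injective (Q τ) := by
      intro x₁ x₂ hx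
      have h0 : Q τ (x₁ - x₂) = 0 := by rw [map_sub, hx, sub_self]
      obtain ⟨z, hz⟩ := hPsurj (x₁ - x₂)
      have h1 : ⟪x₁ - x₂, x₁ - x₂⟫ = 0 := by
        calc ⟪x₁ - x₂, x₁ - x₂⟫ = ⟪P τ z, x₁ - x₂⟫ := by rw [hz]
          _ = ⟪z, Q τ (x₁ - x₂)⟫ := ContinuousLinearMap.adjoint_inner_left (Q τ) (x₁ - x₂) z
          _ = 0 := by rw [h0, inner_zero_right]
      exact sub_eq_zero.1 (inner_self_eq_zero.1 h1)
    have hQsurj : Function.Surjective (Q τ) := by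
      have := LinearMap.injective_iff_surjective.mp
        (show Function.Injective ((Q τ : V →ₗ[ℝ] V)) from hQinj)
      exact this
    let e : V ≃ₗ[ℝ] V := LinearEquiv.ofBijective (Q τ : V →ₗ[ℝ] V) ⟨hQinj, hQsurj⟩
    let ce : V ≃L[ℝ] V := e.toContinuousLinearEquiv
    exact ⟨ce.toUnit, by ext z; rfl⟩
  -- main argument
  intro t ht a b hab u v y
  rcases eq_or_lt_of_le ht with ht0 | ht0
  · rw [← ht0]
    simp [hQ0]
  -- reverse flow
  set Cf : ℝ → (V →L[ℝ] V) := fun s => Ring.inverse (Q (t - s)) * Q t with hCf_def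
  have hCd : ∀ s ∈ Icc (0:ℝ) t, HasDerivAt Cf (-(R (t - s) * Cf s)) s := by
    intro s hs
    have hts : 0 ≤ t - s := by linarith [hs.2]
    have hX : HasDerivAt (fun s => Q (t - s)) (Q (t - s) * R (t - s)) s := by
      have h1 := hQ (t - s) hts
      have h2 : HasDerivAt (fun s : ℝ => t - s) (-1) s := by
        simpa using (hasDerivAt_id s).const_sub t
      have h3 := h1.scomp s h2
      simp at h3
      exact h3
    have hu := hUnit (t - s) hts
    have hinv : HasDerivAt (fun s => Ring.inverse (Q (t - s)))
        (-((↑hu.unit⁻¹ : V →L[ℝ] V) * (Q (t - s) * R (t - s)) * ↑hu.unit⁻¹)) s := by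
      have h4 := (hasFDerivAt_ringInverse hu.unit).comp_hasDerivAt s
        (hu.unit_spec.symm ▸ hX)
      simp at h4
      exact h4
    have hred : (↑hu.unit⁻¹ : V →L[ℝ] V) * (Q (t - s) * R (t - s)) * ↑hu.unit⁻¹
        = R (t - s) * ↑hu.unit⁻¹ := by
      have h5 : (↑hu.unit⁻¹ : V →L[ℝ] V) * Q (t - s) = 1 := hu.val_inv_mul
      rw [← mul_assoc, h5, one_mul]
    rw [hred] at hinv
    have h6 := hinv.mul_const (Q t)
    have h7 : -(R (t - s) * ↑hu.unit⁻¹) * Q t = -(R (t - s) * Cf s) := by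
      have h8 : Cf s = (↑hu.unit⁻¹ : V →L[ℝ] V) * Q t := by
        rw [hCf_def]
        simp only []
        conv_lhs => rw [← hu.unit_spec, Ring.inverse_unit]
      rw [h8, neg_mul, mul_assoc]
    rwa [h7] at h6
  have hC0 : Cf 0 = 1 := by
    rw [hCf_def]
    simp only [sub_zero]
    exact Ring.inverse_mul_cancel _ (hUnit t ht)
  have hCt : Cf t = Q t := by
    rw [hCf_def]
    simp only [sub_self, hQ0]
    rw [show (ContinuousLinearMap.id ℝ V) = (1 : V →L[ℝ] V) from rfl]
    rw [Ring.inverse_one, one_mul]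
  -- the vector flow
  set φ : ℝ → V := fun s => Real.exp (k₁ * s) • (Cf s) y with hφ_def
  set Sop : ℝ → (V →L[ℝ] V) := fun s => R (t - s) - k₁ • (1 : V →L[ℝ] V) with hSop_def
  have hφ0 : φ 0 = y := by
    rw [hφ_def]
    simp [hC0]
  have hφd : ∀ s ∈ Icc (0:ℝ) t, HasDerivAt φ (-(Sop s (φ s))) s := by
    intro s hs
    have ha : HasDerivAt (fun s : ℝ => Real.exp (k₁ * s)) (k₁ * Real.exp (k₁ * s)) s := by
      simpa [mul_comm] using ((hasDerivAt_id s).const_mul k₁).exp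
    have hb : HasDerivAt (fun s => (Cf s) y) ((-(R (t - s) * Cf s)) y) s := by
      simpa using (hCd s hs).clm_apply (hasDerivAt_const s y)
    have hc := ha.smul hb
    refine hc.congr_deriv ?_
    simp only [hSop_def, hφ_def, ContinuousLinearMap.sub_apply, ContinuousLinearMap.smul_apply,
      ContinuousLinearMap.one_apply, ContinuousLinearMap.neg_apply, ContinuousLinearMap.mul_apply,
      map_smul, neg_sub, smul_smul, smul_neg]
    module
  -- properties of Sop
  have hSval : ∀ s (x : V), Sop s x = R (t - s) x - k₁ • x := by
    intro s x
    rw [hSop_def]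
    simp
  have hsym' : ∀ s ∈ Icc (0:ℝ) t, ∀ x z : V, ⟪Sop s x, z⟫ = ⟪x, Sop s z⟫ := by
    intro s hs x z
    have hts : 0 ≤ t - s := by linarith [hs.2]
    rw [hSval, hSval, inner_sub_left, inner_sub_right, hRsym (t - s) hts,
      real_inner_smul_left, real_inner_smul_right]
  have hpos' : ∀ s ∈ Icc (0:ℝ) t, ∀ x : V, 0 ≤ ⟪Sop s x, x⟫ := by
    intro s hs x
    have hts : 0 ≤ t - s := by linarith [hs.2]
    rw [hSval, inner_sub_left, real_inner_smul_left, real_inner_self_eq_norm_sq]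
    linarith [hRlow (t - s) hts x]
  have hup' : ∀ s ∈ Icc (0:ℝ) t, ∀ x : V, ⟪Sop s x, x⟫ ≤ (k₂ - k₁) * ‖x‖ ^ 2 := by
    intro s hs x
    have hts : 0 ≤ t - s := by linarith [hs.2]
    rw [hSval, inner_sub_left, real_inner_smul_left, real_inner_self_eq_norm_sq]
    have := hRup (t - s) hts x
    nlinarith
  obtain ⟨hKey, hContr⟩ := forward_key (K := k₂ - k₁) (T := t) (by linarith) ht0
    Sop φ y hφ0 hφd hsym' hpos' hup'
  -- translate back
  have hφt : φ t = Real.exp (k₁ * t) • Q t y := by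
    rw [hφ_def]
    simp only [hCt]
  have hQty : Q t y = Real.exp (-k₁ * t) • φ t := by
    rw [hφt, smul_smul, ← Real.exp_add]
    norm_num
  set w : V := a • u + b • v with hw_def
  set L : ℝ := Real.exp ((k₂ - k₁) / 2 * t) with hL_def
  set E : ℝ := Real.exp (-k₁ * t) with hE_def
  have hE0 : 0 < E := Real.exp_pos _
  have hL1 : 1 ≤ L := by
    rw [hL_def]
    rw [show (1:ℝ) = Real.exp 0 from (Real.exp_zero).symm]
    apply Real.exp_le_exp.2
    have : 0 ≤ k₂ - k₁ := by linarith
    positivity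
  have hnQ : ‖Q t y‖ ^ 2 = E ^ 2 * ‖φ t‖ ^ 2 := by
    rw [hQty, norm_smul]
    rw [Real.norm_eq_abs, abs_of_pos hE0]
    ring
  have hE2 : Real.exp (-2 * k₁ * t) = E ^ 2 := by
    rw [hE_def, sq, ← Real.exp_add]
    congr 1
    ring
  have hinner : ⟪w, Q t y - E • y⟫ = -(E * ⟪w, y - φ t⟫) := by
    rw [hQty, ← smul_sub, real_inner_smul_right]
    rw [show φ t - y = -(y - φ t) from (neg_sub y (φ t)).symm, inner_neg_right]
    ring
  have hCS : ⟪w, y - φ t⟫ ≤ ‖w‖ * ‖y - φ t‖ := real_inner_le_norm w (y - φ t)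
  -- final algebra
  rw [hnQ, hE2, hinner]
  set α : ℝ := ‖y - φ t‖ with hα_def
  set β : ℝ := ‖w‖ with hβ_def
  set pp : ℝ := ‖y‖ ^ 2 - ‖φ t‖ ^ 2 with hpp_def
  have hα0 : 0 ≤ α := norm_nonneg _
  have hβ0 : 0 ≤ β := norm_nonneg _
  have hpp0 : 0 ≤ pp := by
    rw [hpp_def]
    nlinarith [hContr, norm_nonneg (φ t), norm_nonneg y]
  have hα2 : α ^ 2 ≤ (L - 1) * pp := hKey
  have hD0 : 0 ≤ L - 1 := by linarith
  -- goal : E²‖φt‖² - E²‖y‖² ≤ 4((L-1)β² + -(E ⟪w, y - φt⟫))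
  have hmain2 : 4 * (E * (β * α)) ≤ 4 * ((L - 1) * β ^ 2) + E ^ 2 * pp := by
    have hYsq : (4 * (E * (β * α))) ^ 2
        ≤ 4 * (4 * ((L - 1) * β ^ 2)) * (E ^ 2 * pp) := by
      nlinarith [mul_le_mul_of_nonneg_left hα2
        (show (0:ℝ) ≤ 16 * E ^ 2 * β ^ 2 by positivity)]
    have hA : 0 ≤ 4 * ((L - 1) * β ^ 2) := by positivity
    have hB : 0 ≤ E ^ 2 * pp := by positivity
    nlinarith [hYsq, sq_nonneg (4 * ((L - 1) * β ^ 2) - E ^ 2 * pp), hA, hB]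
  have hip : -(E * ⟪w, y - φ t⟫) ≥ -(E * (β * α)) := by
    have := mul_le_mul_of_nonneg_left hCS hE0.le
    simp only [neg_le_neg_iff]
    linarith [this]
  nlinarith [hmain2, hip]
end

section
/- (Pointwise version of the transport bound, boundary-free part.) Let $V$ be a finite-dimensional inner product space and let $\kappa_1, \kappa_2 : [0,\infty) \to \mathbb{R}$ be continuous with $\kappa_1 \le \kappa_2$ pointwise. Suppose $R : [0,\infty) \to \mathrm{End}(V)$ is continuous, each $R(t)$ symmetric, with $\kappa_1(t) \le R(t) \le \kappa_2(t)$ as quadratic forms. Let $Q$ solve $Q' = -QR$, $Q(0) = \mathrm{id}$, and set $\mathcal{K}_i(t) = \int_0^t \kappa_i(s)ds$. Then $\|Q(t)\| \le e^{-\mathcal{K}_1(t)}$ and $\|\mathrm{id} - e^{\frac{1}{2}(\mathcal{K}_1(t)+\mathcal{K}_2(t))} Q(t)\| \le e^{\frac{1}{2}(\mathcal{K}_2(t) - \mathcal{K}_1(t))} - 1$. -/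
open Real Filter
open scoped RealInnerProductSpace

lemma sym_op_norm_bound {V : Type*} [NormedAddCommGroup V] [InnerProductSpace ℝ V]
    (S : V →L[ℝ] V) (hS : ∀ u w : V, ⟪S u, w⟫ = ⟪u, S w⟫) (c : ℝ)
    (hbound : ∀ u : V, |⟪S u, u⟫| ≤ c * ‖u‖ ^ 2) (u : V) : ‖S u‖ ≤ c * ‖u‖ := by
  rcases eq_or_ne u 0 with rfl | hu
  · simp
  have hc : 0 ≤ c := by
    have h := hbound u
    have h2 : (0:ℝ) < ‖u‖ ^ 2 := pow_pos (norm_pos_iff.2 hu) 2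
    nlinarith [abs_nonneg (⟪S u, u⟫ : ℝ)]
  rcases eq_or_ne (S u) 0 with h0 | h0
  · rw [h0, norm_zero]; exact mul_nonneg hc (norm_nonneg u)
  set w : V := (‖u‖ / ‖S u‖) • S u with hw
  have hpol : 4 * ⟪S u, w⟫ = ⟪S (u + w), u + w⟫ - ⟪S (u - w), u - w⟫ := by
    have h1 : ⟪S w, u⟫ = ⟪S u, w⟫ := by rw [hS w u, real_inner_comm]
    simp only [map_add, map_sub, inner_add_add_self, inner_sub_sub_self,
      inner_add_left, inner_add_right, inner_sub_left, inner_sub_right]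
    linarith
  have hpar : ⟪S (u + w), u + w⟫ - ⟪S (u - w), u - w⟫ ≤ 2 * c * (‖u‖ ^ 2 + ‖w‖ ^ 2) := by
    have h1 := (abs_le.1 (hbound (u + w))).2
    have h2 := (abs_le.1 (hbound (u - w))).1
    have hpar2 : ‖u + w‖ ^ 2 + ‖u - w‖ ^ 2 = 2 * (‖u‖ ^ 2 + ‖w‖ ^ 2) := by
      have := parallelogram_law_with_norm ℝ u w
      nlinarith [this]
    nlinarith
  have hwn : ‖w‖ = ‖u‖ := by
    rw [hw, norm_smul, norm_div, Real.norm_eq_abs, abs_of_nonneg (norm_nonneg u),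
      Real.norm_eq_abs, abs_of_nonneg (norm_nonneg (S u)),
      div_mul_cancel₀ _ (norm_ne_zero_iff.2 h0)]
  have hsw : ⟪S u, w⟫ = ‖u‖ * ‖S u‖ := by
    rw [hw, real_inner_smul_right, real_inner_self_eq_norm_sq]
    rw [sq]
    field_simp
  have hup : (0:ℝ) < ‖u‖ := norm_pos_iff.2 hu
  rw [hwn] at hpar
  have h4 : 4 * (‖u‖ * ‖S u‖) ≤ 4 * c * ‖u‖ ^ 2 := by linarith [hpol, hpar, hsw]
  have key : ‖u‖ * ‖S u‖ ≤ ‖u‖ * (c * ‖u‖) := by nlinarith [h4]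
  exact (mul_le_mul_iff_right₀ hup).1 key

noncomputable def adjEval {V : Type*} [NormedAddCommGroup V] [InnerProductSpace ℝ V]
    [FiniteDimensional ℝ V] (v : V) : (V →L[ℝ] V) →L[ℝ] V :=
  LinearMap.mkContinuous
    { toFun := fun B => ContinuousLinearMap.adjoint B v
      map_add' := by intro B C; simp [map_add]
      map_smul' := by intro c B; simp }
    ‖v‖ (fun B => by
      calc ‖ContinuousLinearMap.adjoint B v‖ ≤ ‖ContinuousLinearMap.adjoint B‖ * ‖v‖ :=
            (ContinuousLinearMap.adjoint B).le_opNorm v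
        _ = ‖v‖ * ‖B‖ := by
            rw [LinearIsometryEquiv.norm_map ContinuousLinearMap.adjoint B]; ring)

@[simp] lemma adjEval_apply {V : Type*} [NormedAddCommGroup V] [InnerProductSpace ℝ V]
    [FiniteDimensional ℝ V] (v : V) (B : V →L[ℝ] V) :
    adjEval v B = ContinuousLinearMap.adjoint B v := rfl

/-- Pointwise (time-dependent) version of the transport bound: if `Q` solves `Q' = -Q ∘ R`,
`Q 0 = id`, where each `R t` is symmetric with `κ₁ t ≤ R t ≤ κ₂ t` as quadratic forms for
continuous functions `κ₁ ≤ κ₂`, and `𝒦ᵢ t = ∫₀ᵗ κᵢ`, then `‖Q t‖ ≤ e^{-𝒦₁ t}` and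
`‖id - e^{(𝒦₁ t + 𝒦₂ t)/2} • Q t‖ ≤ e^{(𝒦₂ t - 𝒦₁ t)/2} - 1` for all `t ≥ 0`. -/
theorem pointwise_transport_bound
    {V : Type*} [NormedAddCommGroup V] [InnerProductSpace ℝ V] [FiniteDimensional ℝ V]
    (κ₁ κ₂ : ℝ → ℝ) (hκ₁ : Continuous κ₁) (hκ₂ : Continuous κ₂)
    (hκ : ∀ t, 0 ≤ t → κ₁ t ≤ κ₂ t)
    (R Q : ℝ → (V →L[ℝ] V)) (hRcont : Continuous R)
    (hRsym : ∀ t, 0 ≤ t → ∀ u v : V, ⟪R t u, v⟫ = ⟪u, R t v⟫)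
    (hRlow : ∀ t, 0 ≤ t → ∀ v : V, κ₁ t * ‖v‖ ^ 2 ≤ ⟪R t v, v⟫)
    (hRup : ∀ t, 0 ≤ t → ∀ v : V, ⟪R t v, v⟫ ≤ κ₂ t * ‖v‖ ^ 2)
    (hQ0 : Q 0 = ContinuousLinearMap.id ℝ V)
    (hQ : ∀ t, 0 ≤ t → HasDerivAt Q (-((Q t).comp (R t))) t)
    (𝒦₁ 𝒦₂ : ℝ → ℝ)
    (h𝒦₁ : ∀ t, 𝒦₁ t = ∫ s in (0 : ℝ)..t, κ₁ s)
    (h𝒦₂ : ∀ t, 𝒦₂ t = ∫ s in (0 : ℝ)..t, κ₂ s) :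
    ∀ t, 0 ≤ t →
      ‖Q t‖ ≤ Real.exp (-𝒦₁ t) ∧
      ‖ContinuousLinearMap.id ℝ V - Real.exp ((𝒦₁ t + 𝒦₂ t) / 2) • Q t‖ ≤
        Real.exp ((𝒦₂ t - 𝒦₁ t) / 2) - 1 := by
  have hK1 : ∀ s : ℝ, HasDerivAt 𝒦₁ (κ₁ s) s := by
    intro s
    rw [show 𝒦₁ = fun u => ∫ x in (0:ℝ)..u, κ₁ x from funext h𝒦₁]
    exact intervalIntegral.integral_hasDerivAt_right (hκ₁.intervalIntegrable _ _)
      (hκ₁.stronglyMeasurable.stronglyMeasurableAtFilter) hκ₁.continuousAt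
  have hK2 : ∀ s : ℝ, HasDerivAt 𝒦₂ (κ₂ s) s := by
    intro s
    rw [show 𝒦₂ = fun u => ∫ x in (0:ℝ)..u, κ₂ x from funext h𝒦₂]
    exact intervalIntegral.integral_hasDerivAt_right (hκ₂.intervalIntegrable _ _)
      (hκ₂.stronglyMeasurable.stronglyMeasurableAtFilter) hκ₂.continuousAt
  have hK10 : 𝒦₁ 0 = 0 := by rw [h𝒦₁]; simp
  have hK20 : 𝒦₂ 0 = 0 := by rw [h𝒦₂]; simp
  set A : ℝ → (V →L[ℝ] V) := fun s => ContinuousLinearMap.adjoint (Q s) with hA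
  have hA0 : A 0 = ContinuousLinearMap.id ℝ V := by
    rw [hA]; simp only [hQ0]; exact ContinuousLinearMap.adjoint_id
  have hRadj : ∀ s, 0 ≤ s → ContinuousLinearMap.adjoint (R s) = R s := fun s hs =>
    ((ContinuousLinearMap.eq_adjoint_iff (R s) (R s)).2 (hRsym s hs)).symm
  have hp : ∀ v : V, ∀ s, 0 ≤ s → HasDerivAt (fun u => A u v) (-(R s (A s v))) s := by
    intro v s hs
    have h := (adjEval v).hasFDerivAt.comp_hasDerivAt s (hQ s hs)
    simp only [Function.comp, adjEval_apply, map_neg, ContinuousLinearMap.adjoint_comp,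
      hRadj s hs, ContinuousLinearMap.neg_apply, ContinuousLinearMap.comp_apply] at h
    exact h
  -- pointwise first bound
  have bound1 : ∀ v : V, ∀ s, 0 ≤ s → ‖A s v‖ ≤ Real.exp (-𝒦₁ s) * ‖v‖ := by
    intro v s hs
    set g : ℝ → ℝ := fun u => Real.exp (2 * 𝒦₁ u) * ⟪A u v, A u v⟫ with hgdef
    have hg : ∀ u, 0 ≤ u → HasDerivAt g
        (Real.exp (2 * 𝒦₁ u) * (2 * κ₁ u * ⟪A u v, A u v⟫ - 2 * ⟪R u (A u v), A u v⟫)) u := by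
      intro u hu
      have h1 : HasDerivAt (fun x => Real.exp (2 * 𝒦₁ x)) (Real.exp (2 * 𝒦₁ u) * (2 * κ₁ u)) u :=
        ((hK1 u).const_mul 2).exp
      have h2 : HasDerivAt (fun x => (⟪A x v, A x v⟫ : ℝ))
          (⟪A u v, -(R u (A u v))⟫ + ⟪-(R u (A u v)), A u v⟫) u :=
        (hp v u hu).inner ℝ (hp v u hu)
      have h3 := h1.mul h2
      convert h3 using 1
      · rfl
      · rfl
      · rfl
      simp only [inner_neg_right, inner_neg_left]
      rw [real_inner_comm (A u v) (R u (A u v))]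
      ring
    have cont : ContinuousOn g (Set.Icc 0 s) := fun u hu =>
      (hg u hu.1).continuousAt.continuousWithinAt
    have anti : AntitoneOn g (Set.Icc 0 s) := by
      apply antitoneOn_of_deriv_nonpos (convex_Icc 0 s) cont
      · intro u hu
        rw [interior_Icc] at hu
        exact (hg u hu.1.le).differentiableAt.differentiableWithinAt
      · intro u hu
        rw [interior_Icc] at hu
        rw [(hg u hu.1.le).deriv]
        have hlow := hRlow u hu.1.le (A u v)
        have h3 : (⟪A u v, A u v⟫ : ℝ) = ‖A u v‖ ^ 2 := real_inner_self_eq_norm_sq _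
        have hexp := (Real.exp_pos (2 * 𝒦₁ u)).le
        apply mul_nonpos_of_nonneg_of_nonpos hexp
        rw [h3]
        linarith
    have hgs : g s ≤ g 0 := anti (Set.left_mem_Icc.2 hs) (Set.right_mem_Icc.2 hs) hs
    have hg0 : g 0 = ‖v‖ ^ 2 := by
      rw [hgdef]
      simp only [hK10, hA0, mul_zero, Real.exp_zero, one_mul, ContinuousLinearMap.id_apply]
      exact real_inner_self_eq_norm_sq v
    have hsq : ‖A s v‖ ^ 2 ≤ (Real.exp (-𝒦₁ s) * ‖v‖) ^ 2 := by
      have h5 : (Real.exp (-𝒦₁ s) * ‖v‖) ^ 2 = Real.exp (-(2 * 𝒦₁ s)) * ‖v‖ ^ 2 := by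
        rw [mul_pow, sq (Real.exp _), ← Real.exp_add]
        ring_nf
      rw [h5]
      have hgs' : Real.exp (2 * 𝒦₁ s) * ‖A s v‖ ^ 2 ≤ ‖v‖ ^ 2 := by
        simp only [hgdef] at hgs
        rw [hK10, hA0] at hgs
        simpa [real_inner_self_eq_norm_sq] using hgs
      have h7 := mul_le_mul_of_nonneg_left hgs' (Real.exp_pos (-(2 * 𝒦₁ s))).le
      rw [← mul_assoc, ← Real.exp_add] at h7
      simpa using h7
    have := Real.sqrt_le_sqrt hsq
    rwa [Real.sqrt_sq (norm_nonneg _),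
      Real.sqrt_sq (by positivity : (0:ℝ) ≤ Real.exp (-𝒦₁ s) * ‖v‖)] at this
  -- pointwise second bound
  have bound2 : ∀ v : V, ∀ s, 0 ≤ s →
      ‖Real.exp ((𝒦₁ s + 𝒦₂ s) / 2) • A s v - v‖ ≤
        (Real.exp ((𝒦₂ s - 𝒦₁ s) / 2) - 1) * ‖v‖ := by
    intro v s hs
    set w : ℝ → V := fun u => Real.exp ((𝒦₁ u + 𝒦₂ u) / 2) • A u v - v with hwdef
    set f' : ℝ → V := fun u =>
      Real.exp ((𝒦₁ u + 𝒦₂ u) / 2) • (((κ₁ u + κ₂ u) / 2) • A u v - R u (A u v)) with hf'def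
    have hw : ∀ u, 0 ≤ u → HasDerivAt w (f' u) u := by
      intro u hu
      have hμ : HasDerivAt (fun x => Real.exp ((𝒦₁ x + 𝒦₂ x) / 2))
          (Real.exp ((𝒦₁ u + 𝒦₂ u) / 2) * ((κ₁ u + κ₂ u) / 2)) u :=
        (((hK1 u).add (hK2 u)).div_const 2).exp
      have h := (hμ.smul (hp v u hu)).sub_const v
      convert h using 1
      · rfl
      rw [hf'def]
      simp only [smul_sub, smul_smul, smul_neg]
      module
    set B : ℝ → ℝ := fun u => (Real.exp ((𝒦₂ u - 𝒦₁ u) / 2) - 1) * ‖v‖ with hBdef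
    set B' : ℝ → ℝ := fun u =>
      (Real.exp ((𝒦₂ u - 𝒦₁ u) / 2) * ((κ₂ u - κ₁ u) / 2)) * ‖v‖ with hB'def
    have hB : ∀ u, HasDerivAt B (B' u) u := by
      intro u
      exact (((((hK2 u).sub (hK1 u)).div_const 2).exp).sub_const 1).mul_const ‖v‖
    have bnd : ∀ x ∈ Set.Ico (0:ℝ) s, ‖f' x‖ ≤ B' x := by
      intro x hx
      have hx0 : (0:ℝ) ≤ x := hx.1
      set S : V →L[ℝ] V := ((κ₁ x + κ₂ x) / 2) • ContinuousLinearMap.id ℝ V - R x with hSdef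
      have hSsym : ∀ u w : V, ⟪S u, w⟫ = ⟪u, S w⟫ := by
        intro u w'
        simp only [hSdef, ContinuousLinearMap.sub_apply, ContinuousLinearMap.smul_apply,
          ContinuousLinearMap.id_apply, inner_sub_left, inner_sub_right,
          real_inner_smul_left, real_inner_smul_right, hRsym x hx0 u w']
      have hSbound : ∀ u : V, |⟪S u, u⟫| ≤ ((κ₂ x - κ₁ x) / 2) * ‖u‖ ^ 2 := by
        intro u
        have h1 := hRlow x hx0 u
        have h2 := hRup x hx0 u
        have h3 : (⟪S u, u⟫ : ℝ) = ((κ₁ x + κ₂ x) / 2) * ⟪u, u⟫ - ⟪R x u, u⟫ := by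
          simp [hSdef, ContinuousLinearMap.sub_apply, inner_sub_left, real_inner_smul_left]
        rw [h3, real_inner_self_eq_norm_sq]
        rw [abs_le]
        constructor <;> nlinarith
      have hSp : ‖S (A x v)‖ ≤ ((κ₂ x - κ₁ x) / 2) * ‖A x v‖ :=
        sym_op_norm_bound S hSsym _ hSbound (A x v)
      have hδ : (0:ℝ) ≤ (κ₂ x - κ₁ x) / 2 := by linarith [hκ x hx0]
      have hpb := bound1 v x hx0
      have hSpeq : ((κ₁ x + κ₂ x) / 2) • A x v - R x (A x v) = S (A x v) := by
        simp [hSdef, ContinuousLinearMap.sub_apply]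
      calc ‖f' x‖ = Real.exp ((𝒦₁ x + 𝒦₂ x) / 2) * ‖S (A x v)‖ := by
            show ‖Real.exp ((𝒦₁ x + 𝒦₂ x) / 2) • (((κ₁ x + κ₂ x) / 2) • A x v - R x (A x v))‖ = _
            rw [hSpeq, norm_smul, Real.norm_eq_abs, abs_of_pos (Real.exp_pos _)]
        _ ≤ Real.exp ((𝒦₁ x + 𝒦₂ x) / 2) * (((κ₂ x - κ₁ x) / 2) * (Real.exp (-𝒦₁ x) * ‖v‖)) := by
            apply mul_le_mul_of_nonneg_left _ (Real.exp_pos _).le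
            exact hSp.trans (mul_le_mul_of_nonneg_left hpb hδ)
        _ = B' x := by
            simp only [hB'def]
            rw [show Real.exp ((𝒦₂ x - 𝒦₁ x) / 2) =
              Real.exp ((𝒦₁ x + 𝒦₂ x) / 2) * Real.exp (-𝒦₁ x) from by
                rw [← Real.exp_add]; congr 1; ring]
            ring
    have hcont : ContinuousOn w (Set.Icc 0 s) := fun u hu =>
      (hw u hu.1).continuousAt.continuousWithinAt
    have ha : ‖w 0‖ ≤ B 0 := by
      rw [hwdef, hBdef]
      simp [hK10, hK20, hA0]
    have := image_norm_le_of_norm_deriv_right_le_deriv_boundary hcont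
      (fun x hx => (hw x hx.1).hasDerivWithinAt) ha hB bnd (Set.right_mem_Icc.2 hs)
    simpa [hwdef, hBdef] using this
  intro t ht
  constructor
  · have hnorm : ‖Q t‖ = ‖A t‖ := (LinearIsometryEquiv.norm_map ContinuousLinearMap.adjoint (Q t)).symm
    rw [hnorm]
    exact ContinuousLinearMap.opNorm_le_bound _ (Real.exp_pos _).le (fun v => bound1 v t ht)
  · have hKle : 𝒦₁ t ≤ 𝒦₂ t := by
      rw [h𝒦₁, h𝒦₂]
      exact intervalIntegral.integral_mono_on ht (hκ₁.intervalIntegrable _ _)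
        (hκ₂.intervalIntegrable _ _) (fun x hx => hκ x hx.1)
    have hnn : (0:ℝ) ≤ Real.exp ((𝒦₂ t - 𝒦₁ t) / 2) - 1 := by
      have h0 : (0:ℝ) ≤ (𝒦₂ t - 𝒦₁ t) / 2 := by linarith
      linarith [Real.one_le_exp h0]
    have hadj : ContinuousLinearMap.adjoint
        (ContinuousLinearMap.id ℝ V - Real.exp ((𝒦₁ t + 𝒦₂ t) / 2) • Q t) =
        ContinuousLinearMap.id ℝ V - Real.exp ((𝒦₁ t + 𝒦₂ t) / 2) • A t := by
      rw [map_sub, ContinuousLinearMap.adjoint_id]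
      congr 1
      simp [hA]
    rw [← LinearIsometryEquiv.norm_map ContinuousLinearMap.adjoint, hadj]
    apply ContinuousLinearMap.opNorm_le_bound _ hnn
    intro v
    have hb2 := bound2 v t ht
    have heq : (ContinuousLinearMap.id ℝ V - Real.exp ((𝒦₁ t + 𝒦₂ t) / 2) • A t) v =
        -(Real.exp ((𝒦₁ t + 𝒦₂ t) / 2) • A t v - v) := by
      simp [ContinuousLinearMap.sub_apply, ContinuousLinearMap.smul_apply]
    rw [heq, norm_neg]
    exact hb2
end
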